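/- Let n ≥ 1, L = 4n+1, and let E(φ) be the total ground-state energy of N↑ = 2n+1 and N↓ = 2n free fermions on an L-site ring with flux φ, i.e. E(φ) = E_{2n+1}(φ) + E_{2n}(φ) where E_N(φ) is the sum of the N smallest values among {−2cos((2πl+φ)/L) : 0 ≤ l ≤ L−1}. Then E attains its minimum over [0, 2π) exactly at φ = π/2 and φ = 3π/2. -/

import Mathlib

open Real

/-- The multiset of single-particle energies `-2 cos((2πl+φ)/L)`, `l = 0, …, L-1`. -/
noncomputable def ringLevels (L : ℕ) (φ : ℝ) : Multiset ℝ :=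
  (Finset.range L).val.map (fun l => -2 * Real.cos ((2 * π * l + φ) / L))

/-- Sum of the `N` smallest single-particle energies. -/
noncomputable def ringEnergy (L N : ℕ) (φ : ℝ) : ℝ :=
  (((ringLevels L φ).sort (· ≤ ·)).take N).sum

/-!
For `0 ≤ φ ≤ π` the `N` lowest levels `-2 cos((2πm + φ)/L)` are those of the `N` consecutive
momenta `m ∈ ℤ` closest to `-φ/2π`, and a sum of cosines over consecutive momenta telescopes into
two sines. For `L = 4n + 1` the two Fermi seas combine to
`E(φ) = -2 (1 + cos(π/L)) / sin(π/L) · cos((φ - π/2)/L)` on `[0, π]`, which is strictly minimal at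
`φ = π/2`. The spectrum is invariant under `φ ↦ 2π - φ`, which gives the second minimiser `3π/2`.
-/

open scoped Finset

theorem Multiset.sum_take_card_sort_add_of_forall_le {α : Type*} [LinearOrder α] [AddCommMonoid α]
    (s t : Multiset α) (h : ∀ a ∈ s, ∀ b ∈ t, a ≤ b) :
    (((s + t).sort (· ≤ ·)).take (card s)).sum = s.sum := by
  have hsorted : (s.sort (· ≤ ·) ++ t.sort (· ≤ ·)).Pairwise (· ≤ ·) :=
    List.pairwise_append.mpr ⟨s.pairwise_sort _, t.pairwise_sort _,
      fun a ha b hb => h a ((s.mem_sort _).mp ha) b ((t.mem_sort _).mp hb)⟩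
  have hperm : ((s + t).sort (· ≤ ·)).Perm (s.sort (· ≤ ·) ++ t.sort (· ≤ ·)) := by
    rw [← Multiset.coe_eq_coe, ← Multiset.coe_add, Multiset.sort_eq, Multiset.sort_eq,
      Multiset.sort_eq]
  rw [List.Perm.eq_of_pairwise' ((s + t).pairwise_sort _) hsorted hperm,
    List.take_left' (s.length_sort _), ← Multiset.sum_coe, Multiset.sort_eq]

theorem Finset.sum_take_card_sort_map_of_forall_le {ι α : Type*} [DecidableEq ι] [LinearOrder α]
    [AddCommMonoid α] {S T : Finset ι} (f : ι → α) (hST : S ⊆ T)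
    (h : ∀ a ∈ S, ∀ b ∈ T \ S, f a ≤ f b) :
    (((T.val.map f).sort (· ≤ ·)).take #S).sum = ∑ i ∈ S, f i := by
  have hT : T.val = S.val + (T \ S).val := by
    rw [sdiff_val, add_tsub_cancel_of_le (val_le_iff.mpr hST)]
  have := Multiset.sum_take_card_sort_add_of_forall_le (S.val.map f) ((T \ S).val.map f) (by
    simp only [Multiset.mem_map, mem_val]
    rintro _ ⟨a, ha, rfl⟩ _ ⟨b, hb, rfl⟩
    exact h a ha b hb)
  rwa [Multiset.card_map, ← Multiset.map_add, ← hT] at this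

theorem Multiset.map_range_reflect (n : ℕ) : (range n).map (fun i => n - 1 - i) = range n := by
  have := congrArg ((↑) : List ℕ → Multiset ℕ) (List.reverse_range' (s := 0) (n := n))
  rw [coe_reverse, zero_add, ← List.range_eq_range'] at this
  rw [Multiset.range, map_coe, ← this]

theorem Multiset.map_Ico_eq_map_range_of_periodic {α : Type*} {f : ℤ → α} {L : ℕ}
    (hf : Function.Periodic f L) (c : ℤ) :
    (Finset.Ico c (c + L)).val.map f = (Finset.range L).val.map (fun l : ℕ => f l) := by
  have hinj : Set.InjOn (· % (L : ℤ)) (Finset.Ico c (c + L)) := by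
    refine Finset.injOn_of_card_image_eq ?_
    rw [Int.image_Ico_emod _ _ (Nat.cast_nonneg L), Int.card_Ico, Int.card_Ico]
    omega
  calc (Finset.Ico c (c + L)).val.map f = (Finset.Ico c (c + L)).val.map (f ∘ (· % (L : ℤ))) := by
        refine Multiset.map_congr rfl fun m _ => ?_
        rw [Function.comp_apply, Int.emod_def, mul_comm]
        exact (hf.sub_int_mul_eq _).symm
    _ = (Finset.Ico 0 (L : ℤ)).val.map f := by
        rw [← Multiset.map_map, ← Finset.image_val_of_injOn hinj,
          Int.image_Ico_emod _ _ (Nat.cast_nonneg L)]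
    _ = (Finset.range L).val.map (fun l : ℕ => f l) := by
        rw [Int.Ico_eq_finset_map, Finset.map_val, Multiset.map_map]
        simp

noncomputable def ringLevel (L : ℕ) (φ : ℝ) (m : ℤ) : ℝ := -2 * cos ((2 * π * m + φ) / L)

theorem ringLevel_periodic (L : ℕ) (φ : ℝ) : Function.Periodic (ringLevel L φ) L := by
  intro m
  rcases Nat.eq_zero_or_pos L with rfl | hL
  · simp
  · have hL' : (L : ℝ) ≠ 0 := by positivity
    have : (2 * π * ((m + L : ℤ) : ℝ) + φ) / L = (2 * π * m + φ) / L + 2 * π := by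
      push_cast; field_simp; ring
    rw [ringLevel, ringLevel, this, cos_add_two_pi]

theorem ringLevels_eq_map_range (L : ℕ) (φ : ℝ) :
    ringLevels L φ = (Finset.range L).val.map (fun l : ℕ => ringLevel L φ l) := by
  change Multiset.map _ (Multiset.bind _ _) = _
  rw [show (fun a : ℕ => (pure (a : ℝ) : Multiset ℝ)) = fun a : ℕ => {(a : ℝ)} from rfl,
    Multiset.bind_singleton, Multiset.map_map]
  rfl

theorem ringLevels_eq_map_Ico (L : ℕ) (φ : ℝ) (c : ℤ) :
    ringLevels L φ = (Finset.Ico c (c + L)).val.map (ringLevel L φ) := by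
  rw [ringLevels_eq_map_range, Multiset.map_Ico_eq_map_range_of_periodic (ringLevel_periodic L φ)]

theorem ringLevels_two_pi_sub (L : ℕ) (φ : ℝ) : ringLevels L (2 * π - φ) = ringLevels L φ := by
  rw [ringLevels_eq_map_range, ringLevels_eq_map_range]
  conv_rhs => rw [Finset.range_val, ← Multiset.map_range_reflect L, Multiset.map_map]
  refine Multiset.map_congr rfl fun l hl => ?_
  have hl : l < L := Finset.mem_range.mp hl
  have hL : (L : ℝ) ≠ 0 := Nat.cast_ne_zero.mpr (by omega)
  have : (2 * π * ((L - 1 - l : ℕ) : ℤ) + φ) / L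
      = 2 * π - (2 * π * (l : ℤ) + (2 * π - φ)) / L := by
    rw [Nat.cast_sub (by omega), Nat.cast_sub (by omega)]
    push_cast
    field_simp
    ring
  rw [Function.comp_apply, ringLevel, ringLevel, this, cos_two_pi_sub]

theorem ringEnergy_two_pi_sub (L N : ℕ) (φ : ℝ) : ringEnergy L N (2 * π - φ) = ringEnergy L N φ := by
  rw [ringEnergy, ringEnergy, ringLevels_two_pi_sub]

theorem Real.cos_le_cos_of_abs_le {x y : ℝ} (hxy : |x| ≤ |y|) (hy : |y| ≤ π) : cos y ≤ cos x := by
  rw [← cos_abs x, ← cos_abs y]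
  exact cos_le_cos_of_nonneg_of_le_pi (abs_nonneg x) hy hxy

theorem ringEnergy_eq_sum_of_abs_le (L : ℕ) (φ : ℝ) (c : ℤ) {S : Finset ℤ}
    (hS : S ⊆ Finset.Ico c (c + L)) (K : ℝ) (hin : ∀ m ∈ S, |2 * π * m + φ| ≤ K)
    (hout : ∀ m ∈ Finset.Ico c (c + L) \ S, K ≤ |2 * π * m + φ| ∧ |2 * π * m + φ| ≤ L * π) :
    ringEnergy L #S φ = ∑ m ∈ S, ringLevel L φ m := by
  rw [ringEnergy, ringLevels_eq_map_Ico L φ c]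
  refine Finset.sum_take_card_sort_map_of_forall_le _ hS fun a ha b hb => ?_
  have hL : (0 : ℝ) < L := by
    have := Finset.mem_Ico.mp (hS ha)
    exact_mod_cast (by omega : 0 < L)
  obtain ⟨hKb, hbL⟩ := hout b hb
  have : cos ((2 * π * b + φ) / L) ≤ cos ((2 * π * a + φ) / L) := by
    apply Real.cos_le_cos_of_abs_le
    · rw [abs_div, abs_div, abs_of_pos hL]
      exact div_le_div_of_nonneg_right ((hin a ha).trans hKb) hL.le
    · rw [abs_div, abs_of_pos hL, div_le_iff₀ hL]
      linarith
  simp only [ringLevel]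
  linarith

theorem ringEnergy_eq_sum_Ico (L N : ℕ) (hN : N ≤ L) {φ : ℝ} (hφ₀ : 0 ≤ φ) (hφπ : φ ≤ π) :
    ringEnergy L N φ = ∑ m ∈ Finset.Ico (-((N : ℤ) / 2)) (N - (N : ℤ) / 2), ringLevel L φ m := by
  have hcard : #(Finset.Ico (-((N : ℤ) / 2)) (N - (N : ℤ) / 2)) = N := by
    rw [Int.card_Ico]
    omega
  conv_lhs => rw [← hcard]
  have hπ := pi_pos
  refine ringEnergy_eq_sum_of_abs_le L φ (-((L : ℤ) / 2)) ?_ (N * π) ?_ ?_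
  · intro m hm
    simp only [Finset.mem_Ico] at hm ⊢
    omega
  · intro m hm
    simp only [Finset.mem_Ico] at hm
    have h₁ : (-N : ℝ) ≤ 2 * m := by exact_mod_cast (by omega : -(N : ℤ) ≤ 2 * m)
    have h₂ : (2 * m + 1 : ℝ) ≤ N := by exact_mod_cast (by omega : 2 * m + 1 ≤ (N : ℤ))
    rw [abs_le]
    constructor <;> nlinarith
  · intro m hm
    simp only [Finset.mem_sdiff, Finset.mem_Ico] at hm
    have h₁ : (-L : ℝ) ≤ 2 * m := by exact_mod_cast (by omega : -(L : ℤ) ≤ 2 * m)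
    have h₂ : (2 * m + 1 : ℝ) ≤ L := by exact_mod_cast (by omega : 2 * m + 1 ≤ (L : ℤ))
    refine ⟨?_, abs_le.mpr ⟨by nlinarith, by nlinarith⟩⟩
    rcases (by omega : 2 * m + 1 ≤ -(N : ℤ) ∨ (N : ℤ) ≤ 2 * m) with h | h
    · have h' : (2 * m + 1 : ℝ) ≤ -N := by exact_mod_cast h
      exact le_abs.mpr (Or.inr (by nlinarith))
    · have h' : (N : ℝ) ≤ 2 * m := by exact_mod_cast h
      exact le_abs.mpr (Or.inl (by nlinarith))

theorem sin_mul_sum_Ico_ringLevel (L : ℕ) (φ : ℝ) {a b : ℤ} (hab : a ≤ b) :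
    sin (π / L) * ∑ m ∈ Finset.Ico a b, ringLevel L φ m
      = sin ((2 * π * a - π + φ) / L) - sin ((2 * π * b - π + φ) / L) := by
  induction b, hab using Int.leInduction with
  | base => simp
  | succ b hab ih =>
    have hprod : ∀ θ v : ℝ, sin v * (-2 * cos θ) = sin (θ - v) - sin (θ + v) := by
      intro θ v
      rw [sin_sub, sin_add]
      ring
    have hsub : (2 * π * b + φ) / L - π / L = (2 * π * b - π + φ) / L := by ring
    have hadd : (2 * π * b + φ) / L + π / L = (2 * π * ((b + 1 : ℤ) : ℝ) - π + φ) / L := by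
      push_cast
      ring
    rw [← Finset.sum_Ico_add_eq_sum_Ico_add_one hab, mul_add, ih, ringLevel, hprod, hsub, hadd]
    ring

noncomputable def halfFillingEnergy (n : ℕ) (φ : ℝ) : ℝ :=
  ringEnergy (4 * n + 1) (2 * n + 1) φ + ringEnergy (4 * n + 1) (2 * n) φ

theorem halfFillingEnergy_two_pi_sub (n : ℕ) (φ : ℝ) :
    halfFillingEnergy n (2 * π - φ) = halfFillingEnergy n φ := by
  simp only [halfFillingEnergy, ringEnergy_two_pi_sub]

theorem halfFillingEnergy_eq {n : ℕ} (hn : 1 ≤ n) {φ : ℝ} (hφ₀ : 0 ≤ φ) (hφπ : φ ≤ π) :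
    halfFillingEnergy n φ = -(2 * (1 + cos (π / (4 * n + 1))) / sin (π / (4 * n + 1)))
      * cos ((φ - π / 2) / (4 * n + 1)) := by
  rw [halfFillingEnergy, ringEnergy_eq_sum_Ico _ _ (by omega) hφ₀ hφπ,
    ringEnergy_eq_sum_Ico _ _ (by omega) hφ₀ hφπ]
  have hup : Finset.Ico (-(((2 * n + 1 : ℕ) : ℤ) / 2)) ((2 * n + 1 : ℕ) - ((2 * n + 1 : ℕ) : ℤ) / 2)
      = Finset.Ico (-(n : ℤ)) (n + 1) := by
    congr 1 <;> omega
  have hdown : Finset.Ico (-(((2 * n : ℕ) : ℤ) / 2)) ((2 * n : ℕ) - ((2 * n : ℕ) : ℤ) / 2)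
      = Finset.Ico (-(n : ℤ)) n := by
    congr 1 <;> omega
  rw [hup, hdown]
  set L : ℝ := ((4 * n + 1 : ℕ) : ℝ) with hL
  have hL' : L = 4 * n + 1 := by rw [hL]; push_cast; ring
  rw [← hL']
  have hLpos : 0 < L := by positivity
  have hv : π / L < π := by
    rw [div_lt_iff₀ hLpos]
    nlinarith [pi_pos, (by exact_mod_cast hn : (1 : ℝ) ≤ n)]
  have hsin : 0 < sin (π / L) := sin_pos_of_pos_of_lt_pi (by positivity) hv
  refine mul_left_cancel₀ hsin.ne' ?_
  rw [mul_add, sin_mul_sum_Ico_ringLevel _ _ (by omega), sin_mul_sum_Ico_ringLevel _ _ (by omega)]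
  -- `L * (π / 2) = 2 * n * π + π / 2` turns the boundary sines into cosines of `(φ - π / 2) / L`.
  have e₁ : sin ((2 * π * ((-n : ℤ) : ℝ) - π + φ) / L) = -cos ((φ - π / 2) / L) := by
    rw [← sin_sub_pi_div_two]; congr 1; rw [hL']; push_cast; field_simp; ring
  have e₂ : sin ((2 * π * ((n + 1 : ℤ) : ℝ) - π + φ) / L) = cos ((φ - π / 2) / L + π / L) := by
    rw [← sin_add_pi_div_two]; congr 1; rw [hL']; push_cast; field_simp; ring
  have e₃ : sin ((2 * π * ((n : ℤ) : ℝ) - π + φ) / L) = cos ((φ - π / 2) / L - π / L) := by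
    rw [← sin_add_pi_div_two]; congr 1; rw [hL']; push_cast; field_simp; ring
  rw [e₁, e₂, e₃, cos_add, cos_sub]
  field_simp
  ring

theorem halfFillingEnergy_pi_div_two_lt {n : ℕ} (hn : 1 ≤ n) {φ : ℝ} (hφ₀ : 0 ≤ φ) (hφπ : φ ≤ π)
    (hφ : φ ≠ π / 2) : halfFillingEnergy n (π / 2) < halfFillingEnergy n φ := by
  have hπ := pi_pos
  have hL : (5 : ℝ) ≤ 4 * n + 1 := by linarith [(by exact_mod_cast hn : (1 : ℝ) ≤ n)]
  have hv₀ : 0 < π / (4 * n + 1) := by positivity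
  have hv : π / (4 * n + 1) < π / 2 := by gcongr; linarith
  have hcoef : 0 < 2 * (1 + cos (π / (4 * n + 1))) / sin (π / (4 * n + 1)) := by
    have := cos_nonneg_of_mem_Icc ⟨by linarith, hv.le⟩
    have := sin_pos_of_pos_of_lt_pi hv₀ (by linarith)
    positivity
  have hcos : cos ((φ - π / 2) / (4 * n + 1)) < 1 := by
    refine (cos_le_one _).lt_of_ne fun h => hφ ?_
    have hw : |(φ - π / 2) / (4 * n + 1)| ≤ π / 2 := by
      rw [abs_div, abs_of_pos (by linarith : (0 : ℝ) < 4 * n + 1), div_le_iff₀ (by linarith),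
        abs_le]
      constructor <;> nlinarith
    rw [cos_eq_one_iff_of_lt_of_lt (by linarith [neg_abs_le ((φ - π / 2) / (4 * n + 1))])
      (by linarith [le_abs_self ((φ - π / 2) / (4 * n + 1))])] at h
    rcases div_eq_zero_iff.mp h with h | h <;> linarith
  rw [halfFillingEnergy_eq hn hφ₀ hφπ, halfFillingEnergy_eq hn (by positivity) (by linarith),
    sub_self, zero_div, cos_zero]
  nlinarith

theorem halfFillingEnergy_pi_div_two_lt_of_mem_Ico {n : ℕ} (hn : 1 ≤ n) {φ : ℝ}
    (hφ : φ ∈ Set.Ico 0 (2 * π)) (h₁ : φ ≠ π / 2) (h₂ : φ ≠ 3 * π / 2) :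
    halfFillingEnergy n (π / 2) < halfFillingEnergy n φ := by
  obtain ⟨hφ₀, hφ₂⟩ := hφ
  rcases le_total φ π with hφπ | hφπ
  · exact halfFillingEnergy_pi_div_two_lt hn hφ₀ hφπ h₁
  · rw [← halfFillingEnergy_two_pi_sub n φ]
    exact halfFillingEnergy_pi_div_two_lt hn (by linarith) (by linarith)
      fun h => h₂ (by linarith)

theorem stmt_15 (n : ℕ) (hn : 1 ≤ n) (L : ℕ) (hL : L = 4 * n + 1)
    (E : ℝ → ℝ) (hE : ∀ φ, E φ = ringEnergy L (2 * n + 1) φ + ringEnergy L (2 * n) φ) :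
    {φ ∈ Set.Ico (0 : ℝ) (2 * π) | ∀ ψ ∈ Set.Ico (0 : ℝ) (2 * π), E φ ≤ E ψ}
      = {π / 2, 3 * π / 2} := by
  subst hL
  obtain rfl : E = halfFillingEnergy n := funext hE
  have hπ := pi_pos
  have h₃ : halfFillingEnergy n (3 * π / 2) = halfFillingEnergy n (π / 2) := by
    rw [← halfFillingEnergy_two_pi_sub]
    ring_nf
  have hmin : ∀ ψ ∈ Set.Ico 0 (2 * π), halfFillingEnergy n (π / 2) ≤ halfFillingEnergy n ψ := by
    intro ψ hψ
    by_cases h₁ : ψ = π / 2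
    · rw [h₁]
    by_cases h₂ : ψ = 3 * π / 2
    · rw [h₂, h₃]
    exact (halfFillingEnergy_pi_div_two_lt_of_mem_Ico hn hψ h₁ h₂).le
  ext φ
  constructor
  · rintro ⟨hφ, hφmin⟩
    by_contra! h
    simp only [Set.mem_insert_iff, Set.mem_singleton_iff, not_or] at h
    exact (hφmin _ ⟨by positivity, by linarith⟩).not_gt
      (halfFillingEnergy_pi_div_two_lt_of_mem_Ico hn hφ h.1 h.2)
  · rintro (rfl | rfl)
    · exact ⟨⟨by positivity, by linarith⟩, hmin⟩
    · exact ⟨⟨by positivity, by linarith⟩, h₃ ▸ hmin⟩
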